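/- Let N be a finite index set of RUs with parameters kₙ > 0 and generation levels Eₙ, let pg > 0 and Ereq be real. Then for every p > 0 the reduced SFC cost function J̃(p) = p · Σₙ (Eₙ − (kₙ/p − 1)) + (Ereq − Σₙ (Eₙ − (kₙ/p − 1))) · pg is twice differentiable at p with second derivative equal to 2 · pg · (Σₙ kₙ) / p³, which is strictly positive whenever Σₙ kₙ > 0. -/

import Mathlib

/-!
Summing the best responses, the energy bought from the RUs is `A - K/q` with
`A = Σₙ (Eₙ + 1)` and `K = Σₙ kₙ`. Away from `q = 0` the cost is therefore
`A q - K + (Ereq - A) pg + pg K / q`, an affine function plus `pg K / q`, whose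
second derivative is `2 pg K / q³`.
-/

open Filter Topology

section AffineAddInv

variable (a b c : ℝ) {q : ℝ}

theorem hasDerivAt_affine_add_inv (hq : q ≠ 0) :
    HasDerivAt (fun x : ℝ => a * x + b + c * x⁻¹) (a - c * (q ^ 2)⁻¹) q := by
  have h := (((hasDerivAt_id q).const_mul a).add_const b).add ((hasDerivAt_inv hq).const_mul c)
  exact h.congr_deriv (by simp only [mul_one]; ring)

theorem hasDerivAt_deriv_affine_add_inv (hq : q ≠ 0) :
    HasDerivAt (deriv fun x : ℝ => a * x + b + c * x⁻¹) (2 * c / q ^ 3) q := by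
  have hderiv : (deriv fun x : ℝ => a * x + b + c * x⁻¹) =ᶠ[𝓝 q]
      fun x => a - c * (x ^ 2)⁻¹ :=
    (eventually_ne_nhds hq).mono fun x hx => (hasDerivAt_affine_add_inv a b c hx).deriv
  have h := (((hasDerivAt_pow 2 q).inv (pow_ne_zero 2 hq)).const_mul c).const_sub a
  refine (h.congr_deriv ?_).congr_of_eventuallyEq hderiv
  field_simp
  ring

end AffineAddInv

noncomputable def sfcCost {ι : Type*} (N : Finset ι) (k E : ι → ℝ) (pg Ereq q : ℝ) : ℝ :=
  q * ∑ n ∈ N, (E n - (k n / q - 1)) + (Ereq - ∑ n ∈ N, (E n - (k n / q - 1))) * pg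

section SfcCost

variable {ι : Type*} (N : Finset ι) (k E : ι → ℝ) (pg Ereq : ℝ)

theorem sum_sub_div_sub_one (q : ℝ) :
    ∑ n ∈ N, (E n - (k n / q - 1)) = ∑ n ∈ N, (E n + 1) - (∑ n ∈ N, k n) / q := by
  rw [Finset.sum_div, ← Finset.sum_sub_distrib]
  exact Finset.sum_congr rfl fun n _ => by ring

-- `q * (K / q) = K` fails at `q = 0`, so the identity only holds near a nonzero point.
theorem sfcCost_eventuallyEq_affine_add_inv {p : ℝ} (hp : p ≠ 0) :
    sfcCost N k E pg Ereq =ᶠ[𝓝 p] fun q =>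
      (∑ n ∈ N, (E n + 1)) * q + ((Ereq - ∑ n ∈ N, (E n + 1)) * pg - ∑ n ∈ N, k n) +
        pg * (∑ n ∈ N, k n) * q⁻¹ :=
  (eventually_ne_nhds hp).mono fun q hq => by
    simp only [sfcCost, sum_sub_div_sub_one]
    field_simp
    ring

theorem hasDerivAt_sfcCost {p : ℝ} (hp : p ≠ 0) :
    HasDerivAt (sfcCost N k E pg Ereq)
      ((∑ n ∈ N, (E n + 1)) - pg * (∑ n ∈ N, k n) * (p ^ 2)⁻¹) p :=
  (hasDerivAt_affine_add_inv _ _ _ hp).congr_of_eventuallyEq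
    (sfcCost_eventuallyEq_affine_add_inv N k E pg Ereq hp)

theorem hasDerivAt_deriv_sfcCost {p : ℝ} (hp : p ≠ 0) :
    HasDerivAt (deriv (sfcCost N k E pg Ereq)) (2 * (pg * ∑ n ∈ N, k n) / p ^ 3) p :=
  (hasDerivAt_deriv_affine_add_inv _ _ _ hp).congr_of_eventuallyEq
    (sfcCost_eventuallyEq_affine_add_inv N k E pg Ereq hp).deriv

end SfcCost

theorem sfc_cost_second_derivative_general {ι : Type*} (N : Finset ι) (k E : ι → ℝ)
    (pg : ℝ) (hpg : 0 < pg) (Ereq : ℝ)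
    (p : ℝ) (hp : 0 < p) :
    DifferentiableAt ℝ
      (fun q : ℝ => q * ∑ n ∈ N, (E n - (k n / q - 1)) +
        (Ereq - ∑ n ∈ N, (E n - (k n / q - 1))) * pg) p ∧
    DifferentiableAt ℝ
      (deriv (fun q : ℝ => q * ∑ n ∈ N, (E n - (k n / q - 1)) +
        (Ereq - ∑ n ∈ N, (E n - (k n / q - 1))) * pg)) p ∧
    deriv (deriv (fun q : ℝ => q * ∑ n ∈ N, (E n - (k n / q - 1)) +
        (Ereq - ∑ n ∈ N, (E n - (k n / q - 1))) * pg)) p =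
      2 * pg * (∑ n ∈ N, k n) / p ^ 3 ∧
    (0 < ∑ n ∈ N, k n →
      0 < deriv (deriv (fun q : ℝ => q * ∑ n ∈ N, (E n - (k n / q - 1)) +
        (Ereq - ∑ n ∈ N, (E n - (k n / q - 1))) * pg)) p) := by
  have hsecond := hasDerivAt_deriv_sfcCost N k E pg Ereq hp.ne'
  have heq : deriv (deriv (sfcCost N k E pg Ereq)) p = 2 * pg * (∑ n ∈ N, k n) / p ^ 3 := by
    rw [hsecond.deriv, mul_assoc]
  refine ⟨(hasDerivAt_sfcCost N k E pg Ereq hp.ne').differentiableAt,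
    hsecond.differentiableAt, heq, fun hK => ?_⟩
  change 0 < deriv (deriv (sfcCost N k E pg Ereq)) p
  rw [heq]
  positivity

/-- For every `p > 0`, the reduced SFC cost function is twice differentiable at `p`
with second derivative `2·pg·(Σₙ kₙ)/p³`, which is strictly positive whenever
`Σₙ kₙ > 0`. -/
theorem sfc_cost_second_derivative {ι : Type*} (N : Finset ι) (k E : ι → ℝ)
    (hk : ∀ n ∈ N, 0 < k n) (pg : ℝ) (hpg : 0 < pg) (Ereq : ℝ)
    (p : ℝ) (hp : 0 < p) :
    DifferentiableAt ℝ
      (fun q : ℝ => q * ∑ n ∈ N, (E n - (k n / q - 1)) +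
        (Ereq - ∑ n ∈ N, (E n - (k n / q - 1))) * pg) p ∧
    DifferentiableAt ℝ
      (deriv (fun q : ℝ => q * ∑ n ∈ N, (E n - (k n / q - 1)) +
        (Ereq - ∑ n ∈ N, (E n - (k n / q - 1))) * pg)) p ∧
    deriv (deriv (fun q : ℝ => q * ∑ n ∈ N, (E n - (k n / q - 1)) +
        (Ereq - ∑ n ∈ N, (E n - (k n / q - 1))) * pg)) p =
      2 * pg * (∑ n ∈ N, k n) / p ^ 3 ∧
    (0 < ∑ n ∈ N, k n →
      0 < deriv (deriv (fun q : ℝ => q * ∑ n ∈ N, (E n - (k n / q - 1)) +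
        (Ereq - ∑ n ∈ N, (E n - (k n / q - 1))) * pg)) p) :=
  sfc_cost_second_derivative_general N k E pg hpg Ereq p hp
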